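/- Let S0 and S1 be nonempty finite subsets of ℝ² in general position. Then S0 and S1 have a separating common tangent if and only if the convex hulls of S0 and S1 are disjoint. -/

import Mathlib

/-- Finite sets `S0, S1 ⊆ ℝ²` are in *general position* if they are disjoint
and no three distinct points of `S0 ∪ S1` are collinear. -/
def InGeneralPosition (S0 S1 : Set (ℝ × ℝ)) : Prop :=
  S0 ∩ S1 = ∅ ∧
    ∀ a ∈ S0 ∪ S1, ∀ b ∈ S0 ∪ S1, ∀ c ∈ S0 ∪ S1,
      a ≠ b → a ≠ c → b ≠ c → ¬ Collinear ℝ ({a, b, c} : Set (ℝ × ℝ))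

/-- The line `{x | f x = c}` is a *separating common tangent* of `S0` and `S1`
if it intersects the convex hulls of both sets, `S0` is contained in one
closed half-plane of the line and `S1` is contained in the other. -/
def IsSeparatingCommonTangent (f : ℝ × ℝ →ₗ[ℝ] ℝ) (c : ℝ) (S0 S1 : Set (ℝ × ℝ)) : Prop :=
  ({x | f x = c} ∩ convexHull ℝ S0).Nonempty ∧
  ({x | f x = c} ∩ convexHull ℝ S1).Nonempty ∧
    ((S0 ⊆ {x | f x ≤ c} ∧ S1 ⊆ {x | c ≤ f x}) ∨
      (S0 ⊆ {x | c ≤ f x} ∧ S1 ⊆ {x | f x ≤ c}))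

/-!
(⇒) A common point `z` of the two hulls lies on the tangent line `f = c`, hence in the hull of
the points of `S0` on that line and in the hull of the points of `S1` on it. By general position
the line carries at most two points of `S0 ∪ S1`, so these are single points `a ∈ S0`, `b ∈ S1`,
and `z = a = b` contradicts `S0 ∩ S1 = ∅`.

(⇐) `D = conv S1 - conv S0` is compact, convex and misses `0`, so some functional `g` is
positive on `D`. Turning `g` towards an independent functional `G` until it first vanishes
somewhere on `D` (maximise `G / g` on `D`) gives `F ≠ 0` with `F ≥ 0` on `D` and `F = 0` at some
`y₀ - x₀ ∈ D`; then `F = F x₀` is a separating common tangent through `x₀` and `y₀`.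
-/

open Module Set Pointwise

section Face
variable {𝕜 E : Type*} [Field 𝕜] [LinearOrder 𝕜] [IsStrictOrderedRing 𝕜] [AddCommGroup E]
  [Module 𝕜 E] {f : E →ₗ[𝕜] 𝕜} {c : 𝕜}

theorem Convex.setOf_lt_union {A : Set E} (hA : Convex 𝕜 A) (hAf : A ⊆ {x | f x = c}) :
    Convex 𝕜 ({x | f x < c} ∪ A) := by
  have hlt : ∀ {x y a b}, f x < c → f y ≤ c → 0 < a → 0 ≤ b → a + b = (1 : 𝕜) →
      f (a • x + b • y) < c := by
    intro x y a b hx hy ha hb hab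
    rw [map_add, map_smul, map_smul, smul_eq_mul, smul_eq_mul]
    calc a * f x + b * f y < a * c + b * c :=
          add_lt_add_of_lt_of_le (mul_lt_mul_of_pos_left hx ha) (mul_le_mul_of_nonneg_left hy hb)
      _ = c := by rw [← add_mul, hab, one_mul]
  rintro x (hx | hx) y (hy | hy) a b ha hb hab
  · rcases ha.eq_or_lt with rfl | ha
    · rw [zero_add] at hab; subst hab
      simpa using Or.inl hy
    · exact Or.inl (hlt hx hy.le ha hb hab)
  · rcases ha.eq_or_lt with rfl | ha
    · rw [zero_add] at hab; subst hab
      simpa using Or.inr hy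
    · exact Or.inl (hlt hx (hAf hy).le ha hb hab)
  · rcases hb.eq_or_lt with rfl | hb
    · rw [add_zero] at hab; subst hab
      simpa using Or.inr hx
    · rw [add_comm] at hab ⊢
      exact Or.inl (hlt hy (hAf hx).le hb ha hab)
  · exact Or.inr (hA hx hy ha hb hab)

theorem convexHull_inter_setOf_eq_subset {S : Set E} (hS : S ⊆ {x | f x ≤ c}) :
    convexHull 𝕜 S ∩ {x | f x = c} ⊆ convexHull 𝕜 (S ∩ {x | f x = c}) := by
  have hsub : convexHull 𝕜 S ⊆ {x | f x < c} ∪ convexHull 𝕜 (S ∩ {x | f x = c}) :=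
    convexHull_min
      (fun x hx => (hS hx).lt_or_eq.imp id fun h => subset_convexHull 𝕜 _ ⟨hx, h⟩)
      ((convex_convexHull 𝕜 _).setOf_lt_union
        (convexHull_min inter_subset_right (convex_hyperplane f.isLinear c)))
  rintro z ⟨hz, hfz⟩
  exact (hsub hz).resolve_left (by simp [show f z = c from hfz])

end Face

theorem collinear_of_subset_setOf_eq {k V : Type*} [Field k] [AddCommGroup V] [Module k V]
    [FiniteDimensional k V] (hV : finrank k V ≤ 2) {f : Dual k V} (hf : f ≠ 0) {c : k}
    {s : Set V} (hs : s ⊆ {x | f x = c}) : Collinear k s := by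
  have hspan : vectorSpan k s ≤ LinearMap.ker f := by
    rw [vectorSpan_def, Submodule.span_le]
    rintro _ ⟨x, hx, y, hy, rfl⟩
    simp [show f x = c from hs hx, show f y = c from hs hy]
  rw [collinear_iff_finrank_le_one]
  have := Submodule.finrank_mono hspan
  have := f.finrank_ker_add_one_of_ne_zero hf
  omega

section Tangent
variable {E : Type*} [NormedAddCommGroup E] [NormedSpace ℝ E] [FiniteDimensional ℝ E]

theorem exists_dual_ne_zero_nonneg_on_of_zero_notMem (hE : 2 ≤ finrank ℝ E) {D : Set E}
    (hDc : IsCompact D) (hDcv : Convex ℝ D) (hDne : D.Nonempty) (hD0 : (0 : E) ∉ D) :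
    ∃ F : Dual ℝ E, F ≠ 0 ∧ (∀ d ∈ D, 0 ≤ F d) ∧ ∃ d ∈ D, F d = 0 := by
  obtain ⟨g, u, hu, hgu⟩ := geometric_hahn_banach_point_closed hDcv hDc.isClosed hD0
  have hg : ∀ d ∈ D, 0 < g d := fun d hd => (map_zero g ▸ hu).trans (hgu d hd)
  obtain ⟨G, -, hG⟩ : ∃ G ∈ (⊤ : Submodule ℝ (Dual ℝ E)), G ∉ ℝ ∙ (g : Dual ℝ E) := by
    refine SetLike.exists_of_lt (Submodule.lt_top_of_finrank_lt_finrank ?_)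
    calc finrank ℝ (ℝ ∙ (g : Dual ℝ E)) ≤ 1 :=
          (finrank_span_le_card ({(g : Dual ℝ E)} : Set _)).trans (by simp)
      _ < finrank ℝ (Dual ℝ E) := by rw [Subspace.dual_finrank_eq]; omega
  obtain ⟨d₀, hd₀, hmax⟩ := hDc.exists_isMaxOn hDne <|
    G.continuous_of_finiteDimensional.continuousOn.div g.continuous.continuousOn
      fun d hd => (hg d hd).ne'
  set s := G d₀ / g d₀
  refine ⟨s • (g : Dual ℝ E) - G, fun h => hG ?_, fun d hd => ?_, d₀, hd₀, ?_⟩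
  · rw [← sub_eq_zero.1 h]
    exact Submodule.smul_mem _ _ (Submodule.mem_span_singleton_self _)
  · have : G d ≤ s * g d := (div_le_iff₀ (hg d hd)).1 (hmax hd)
    simpa using this
  · simp [s, div_mul_cancel₀ _ (hg d₀ hd₀).ne']

theorem exists_common_tangent_of_disjoint (hE : 2 ≤ finrank ℝ E) {K₀ K₁ : Set E}
    (hK₀c : IsCompact K₀) (hK₁c : IsCompact K₁) (hK₀cv : Convex ℝ K₀) (hK₁cv : Convex ℝ K₁)
    (hK₀ne : K₀.Nonempty) (hK₁ne : K₁.Nonempty) (hK : Disjoint K₀ K₁) :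
    ∃ F : Dual ℝ E, F ≠ 0 ∧ ∃ c, (∃ x ∈ K₀, F x = c) ∧ (∃ y ∈ K₁, F y = c) ∧
      (∀ x ∈ K₀, F x ≤ c) ∧ ∀ y ∈ K₁, c ≤ F y := by
  obtain ⟨F, hF, hFD, d₀, hd₀, hFd₀⟩ := exists_dual_ne_zero_nonneg_on_of_zero_notMem hE
    (by simpa [sub_eq_add_neg] using hK₁c.add hK₀c.neg) (hK₁cv.sub hK₀cv) (hK₁ne.sub hK₀ne)
    (zero_notMem_sub_iff.2 hK.symm)
  obtain ⟨y₀, hy₀, x₀, hx₀, rfl⟩ := hd₀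
  have hFx₀ : F x₀ = F y₀ := (sub_eq_zero.1 ((map_sub F y₀ x₀).symm.trans hFd₀)).symm
  refine ⟨F, hF, F x₀, ⟨x₀, hx₀, rfl⟩, ⟨y₀, hy₀, hFx₀.symm⟩, fun x hx => ?_, fun y hy => ?_⟩
  · simpa [hFx₀] using hFD _ (sub_mem_sub hy₀ hx)
  · simpa using hFD _ (sub_mem_sub hy hx₀)

end Tangent

theorem InGeneralPosition.symm {S0 S1 : Set (ℝ × ℝ)} (h : InGeneralPosition S0 S1) :
    InGeneralPosition S1 S0 := by
  unfold InGeneralPosition at h ⊢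
  rwa [inter_comm, union_comm]

theorem InGeneralPosition.ne_of_mem {S0 S1 : Set (ℝ × ℝ)} (hgen : InGeneralPosition S0 S1)
    {a b : ℝ × ℝ} (ha : a ∈ S0) (hb : b ∈ S1) : a ≠ b := by
  rintro rfl
  exact (eq_empty_iff_forall_notMem.1 hgen.1) a ⟨ha, hb⟩

theorem InGeneralPosition.inter_setOf_eq_subset_singleton {S0 S1 : Set (ℝ × ℝ)}
    (hgen : InGeneralPosition S0 S1) {f : Dual ℝ (ℝ × ℝ)} (hf : f ≠ 0) {c : ℝ} {a b : ℝ × ℝ}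
    (ha : a ∈ S0) (hb : b ∈ S1) (hfa : f a = c) (hfb : f b = c) :
    S0 ∩ {x | f x = c} ⊆ {a} := by
  rintro p ⟨hp, hfp : f p = c⟩
  by_contra hpa
  refine hgen.2 a (Or.inl ha) b (Or.inr hb) p (Or.inl hp) (hgen.ne_of_mem ha hb) (Ne.symm hpa)
    (hgen.ne_of_mem hp hb).symm (collinear_of_subset_setOf_eq (c := c) (by simp) hf ?_)
  simp [insert_subset_iff, hfa, hfb, hfp]

theorem InGeneralPosition.disjoint_convexHull_of_subset_halfSpaces {S0 S1 : Set (ℝ × ℝ)}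
    (hgen : InGeneralPosition S0 S1) {f : Dual ℝ (ℝ × ℝ)} (hf : f ≠ 0) {c : ℝ}
    (h0 : S0 ⊆ {x | f x ≤ c}) (h1 : S1 ⊆ {x | c ≤ f x}) :
    Disjoint (convexHull ℝ S0) (convexHull ℝ S1) := by
  refine disjoint_left.2 fun z hz0 hz1 => ?_
  have hfz : f z = c := le_antisymm (convexHull_min h0 (convex_halfSpace_le f.isLinear c) hz0)
    (convexHull_min h1 (convex_halfSpace_ge f.isLinear c) hz1)
  have hz0' := convexHull_inter_setOf_eq_subset h0 ⟨hz0, hfz⟩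
  have hz1' : z ∈ convexHull ℝ (S1 ∩ {x | f x = c}) := by
    simpa using convexHull_inter_setOf_eq_subset (f := -f) (c := -c)
      (fun x hx => neg_le_neg (h1 hx)) ⟨hz1, by simp [hfz]⟩
  obtain ⟨a, ha, hfa : f a = c⟩ := convexHull_nonempty_iff.1 ⟨z, hz0'⟩
  obtain ⟨b, hb, hfb : f b = c⟩ := convexHull_nonempty_iff.1 ⟨z, hz1'⟩
  have hza : z = a := by
    simpa using convexHull_mono (hgen.inter_setOf_eq_subset_singleton hf ha hb hfa hfb) hz0'
  have hzb : z = b := by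
    simpa using convexHull_mono (hgen.symm.inter_setOf_eq_subset_singleton hf hb ha hfb hfa) hz1'
  exact hgen.ne_of_mem ha hb (hza.symm.trans hzb)

/-- Nonempty finite sets `S0` and `S1` in general position have a separating
common tangent if and only if their convex hulls are disjoint. -/
theorem separatingCommonTangent_iff_hulls_disjoint (S0 S1 : Set (ℝ × ℝ))
    (h0fin : S0.Finite) (h1fin : S1.Finite)
    (h0ne : S0.Nonempty) (h1ne : S1.Nonempty)
    (hgen : InGeneralPosition S0 S1) :
    (∃ (f : ℝ × ℝ →ₗ[ℝ] ℝ) (c : ℝ), f ≠ 0 ∧ IsSeparatingCommonTangent f c S0 S1) ↔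
      Disjoint (convexHull ℝ S0) (convexHull ℝ S1) := by
  constructor
  · rintro ⟨f, c, hf, -, -, ⟨h0, h1⟩ | ⟨h0, h1⟩⟩
    · exact hgen.disjoint_convexHull_of_subset_halfSpaces hf h0 h1
    · exact (hgen.symm.disjoint_convexHull_of_subset_halfSpaces hf h1 h0).symm
  · intro hdisj
    obtain ⟨F, hF, c, ⟨x, hx, hFx⟩, ⟨y, hy, hFy⟩, hK₀, hK₁⟩ :=
      exists_common_tangent_of_disjoint (by simp) (h0fin.isCompact_convexHull ℝ)
        (h1fin.isCompact_convexHull ℝ) (convex_convexHull ℝ S0) (convex_convexHull ℝ S1)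
        h0ne.convexHull h1ne.convexHull hdisj
    exact ⟨F, c, hF, ⟨x, hFx, hx⟩, ⟨y, hFy, hy⟩,
      Or.inl ⟨fun x hx => hK₀ x (subset_convexHull ℝ S0 hx),
        fun y hy => hK₁ y (subset_convexHull ℝ S1 hy)⟩⟩
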